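/- Let F : ℝⁿ → ℝⁿ be continuously differentiable, let z be a zero of F, and suppose ‖F'(x)⁻¹‖ ≤ K and ‖F'(x) − F'(y)‖ ≤ L‖x − y‖ for all x, y, with K, L > 0. Let x_{k+1} = x_k − F'(x_k)⁻¹F(x_k) be the exact Newton iteration. Then ‖x_{k+1} − z‖ ≤ (1/2)KL‖x_k − z‖² for all k; consequently, if ‖x_0 − z‖ < 2/(KL), then ‖x_k − z‖ ≤ (2/(KL)) · ((KL/2)‖x_0 − z‖)^{2^k} for all k, and x_k → z. -/

import Mathlib

open Filter Set

lemma taylor_quad {E : Type*} [NormedAddCommGroup E] [NormedSpace ℝ E]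
    (F : E → E) (F' : E → (E →L[ℝ] E)) (hF : ∀ u, HasFDerivAt F (F' u) u)
    (L : ℝ) (hLip : ∀ u v, ‖F' u - F' v‖ ≤ L * ‖u - v‖) (u v : E) :
    ‖F u - F v - F' v (u - v)‖ ≤ L / 2 * ‖u - v‖ ^ 2 := by
  set d := u - v with hd
  set f : ℝ → E := fun t => F (v + t • d) - F v - t • (F' v d) with hf
  have hderiv : ∀ t : ℝ, HasDerivAt f ((F' (v + t • d)) d - F' v d) t := by
    intro t
    have h1 : HasDerivAt (fun t : ℝ => v + t • d) d t := by
      simpa using ((hasDerivAt_id t).smul_const d).const_add v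
    have h2 : HasDerivAt (fun t : ℝ => F (v + t • d)) ((F' (v + t • d)) d) t := by
      exact (hF (v + t • d)).comp_hasDerivAt t h1
    convert (h2.sub_const (F v)).sub ((hasDerivAt_id t).smul_const (F' v d)) using 1
    · rfl
    · simp
  have hbound : ∀ t ∈ Ico (0:ℝ) 1, ‖(F' (v + t • d)) d - F' v d‖ ≤ L * ‖d‖ ^ 2 * t := by
    intro t ht
    have h1 : ‖(F' (v + t • d)) d - F' v d‖ ≤ ‖F' (v + t • d) - F' v‖ * ‖d‖ := by
      simpa using (F' (v + t • d) - F' v).le_opNorm d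
    have h2 : ‖F' (v + t • d) - F' v‖ ≤ L * (t * ‖d‖) := by
      have := hLip (v + t • d) v
      simpa [norm_smul, abs_of_nonneg ht.1] using this
    calc ‖(F' (v + t • d)) d - F' v d‖ ≤ L * (t * ‖d‖) * ‖d‖ := by
          refine h1.trans (mul_le_mul_of_nonneg_right h2 (norm_nonneg d))
      _ = L * ‖d‖ ^ 2 * t := by ring
  have key := image_norm_le_of_norm_deriv_right_le_deriv_boundary (f := f) (a := 0) (b := 1)
      (f' := fun t => (F' (v + t • d)) d - F' v d)
      (B := fun t => L * ‖d‖ ^ 2 * (t ^ 2 / 2)) (B' := fun t => L * ‖d‖ ^ 2 * t)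
      (fun t _ => (hderiv t).continuousAt.continuousWithinAt)
      (fun t _ => (hderiv t).hasDerivWithinAt)
      (by simp [hf])
      (fun t => by simpa using ((hasDerivAt_pow 2 t).div_const 2).const_mul (L * ‖d‖ ^ 2))
      hbound
  have h1 : f 1 = F u - F v - F' v (u - v) := by simp [hf, hd]
  have h2 := key ⟨zero_le_one, le_refl 1⟩
  rw [h1] at h2
  refine h2.trans_eq ?_
  rw [hd]; ring

/-- **Exact Newton iteration: local quadratic convergence.** If
`‖F'(x)⁻¹‖ ≤ K` and `‖F'(x) − F'(y)‖ ≤ L‖x − y‖` for all `x, y` with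
`K, L > 0`, `z` is a zero of `F`, and `x_{k+1} = x_k − F'(x_k)⁻¹F(x_k)`, then
`‖x_{k+1} − z‖ ≤ (1/2)KL‖x_k − z‖²` for all `k`; consequently, if
`‖x_0 − z‖ < 2/(KL)` then
`‖x_k − z‖ ≤ (2/(KL))((KL/2)‖x_0 − z‖)^{2^k}` for all `k` and `x_k → z`. -/
theorem newton_quadratic_convergence {n : ℕ}
    (F : EuclideanSpace ℝ (Fin n) → EuclideanSpace ℝ (Fin n))
    (F' F'inv : EuclideanSpace ℝ (Fin n) →
      (EuclideanSpace ℝ (Fin n) →L[ℝ] EuclideanSpace ℝ (Fin n)))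
    (hF : ∀ u, HasFDerivAt F (F' u) u)
    (hF'c : Continuous F')
    (hinv : ∀ u,
      (F' u).comp (F'inv u) = ContinuousLinearMap.id ℝ (EuclideanSpace ℝ (Fin n)) ∧
      (F'inv u).comp (F' u) = ContinuousLinearMap.id ℝ (EuclideanSpace ℝ (Fin n)))
    (K L : ℝ) (hK0 : 0 < K) (hL0 : 0 < L)
    (hK : ∀ u, ‖F'inv u‖ ≤ K)
    (hLip : ∀ u v, ‖F' u - F' v‖ ≤ L * ‖u - v‖)
    (z : EuclideanSpace ℝ (Fin n)) (hz : F z = 0)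
    (x : ℕ → EuclideanSpace ℝ (Fin n))
    (hiter : ∀ k, x (k + 1) = x k - (F'inv (x k)) (F (x k))) :
    (∀ k, ‖x (k + 1) - z‖ ≤ (1 / 2) * K * L * ‖x k - z‖ ^ 2) ∧
    (‖x 0 - z‖ < 2 / (K * L) →
      (∀ k, ‖x k - z‖ ≤ (2 / (K * L)) * ((K * L / 2) * ‖x 0 - z‖) ^ (2 ^ k)) ∧
      Tendsto x atTop (nhds z)) := by
  have hKL : 0 < K * L := mul_pos hK0 hL0
  have main : ∀ k, ‖x (k + 1) - z‖ ≤ (1 / 2) * K * L * ‖x k - z‖ ^ 2 := by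
    intro k
    set u := x k
    have hid : (F'inv u) ((F' u) (u - z)) = u - z := by
      have := (hinv u).2
      calc (F'inv u) ((F' u) (u - z)) = ((F'inv u).comp (F' u)) (u - z) := rfl
        _ = u - z := by rw [this]; rfl
    have heq : x (k + 1) - z = (F'inv u) ((F' u) (u - z) - F u) := by
      rw [hiter k, map_sub, hid]
      abel
    have htay : ‖(F' u) (u - z) - F u‖ ≤ L / 2 * ‖u - z‖ ^ 2 := by
      have h := taylor_quad F F' hF L hLip z u
      rw [norm_sub_rev z u] at h
      have he : (F' u) (u - z) - F u = F z - F u - F' u (z - u) := by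
        rw [hz, map_sub, map_sub]; abel
      rw [he]; exact h
    calc ‖x (k + 1) - z‖ = ‖(F'inv u) ((F' u) (u - z) - F u)‖ := by rw [heq]
      _ ≤ ‖F'inv u‖ * ‖(F' u) (u - z) - F u‖ := (F'inv u).le_opNorm _
      _ ≤ K * (L / 2 * ‖u - z‖ ^ 2) := by
          apply mul_le_mul (hK u) htay (norm_nonneg _) hK0.le
      _ = (1 / 2) * K * L * ‖u - z‖ ^ 2 := by ring
  refine ⟨main, fun h0 => ?_⟩
  set r := K * L / 2 * ‖x 0 - z‖ with hr
  have hr0 : 0 ≤ r := by positivity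
  have hr1 : r < 1 := by
    have h2 : ‖x 0 - z‖ * (K * L) < 2 := (lt_div_iff₀ hKL).mp h0
    calc r = ‖x 0 - z‖ * (K * L) / 2 := by rw [hr]; ring
      _ < 2 / 2 := by linarith
      _ = 1 := by norm_num
  have bound : ∀ k, ‖x k - z‖ ≤ 2 / (K * L) * r ^ (2 ^ k) := by
    intro k
    induction k with
    | zero =>
      have : 2 / (K * L) * (K * L / 2 * ‖x 0 - z‖) ^ 2 ^ 0 = ‖x 0 - z‖ := by
        rw [pow_zero, pow_one]; field_simp
      rw [hr, this]
    | succ k ih =>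
      have h1 := main k
      have h2 : ‖x k - z‖ ^ 2 ≤ (2 / (K * L) * r ^ (2 ^ k)) ^ 2 :=
        pow_le_pow_left₀ (norm_nonneg _) ih 2
      calc ‖x (k + 1) - z‖ ≤ (1 / 2) * K * L * ‖x k - z‖ ^ 2 := h1
        _ ≤ (1 / 2) * K * L * (2 / (K * L) * r ^ (2 ^ k)) ^ 2 := by
            apply mul_le_mul_of_nonneg_left h2 (by positivity)
        _ = 2 / (K * L) * (r ^ (2 ^ k)) ^ 2 := by field_simp
        _ = 2 / (K * L) * r ^ (2 ^ (k + 1)) := by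
            rw [← pow_mul, pow_succ]
  refine ⟨bound, ?_⟩
  rw [tendsto_iff_norm_sub_tendsto_zero]
  have hpow : Tendsto (fun k : ℕ => 2 / (K * L) * r ^ (2 ^ k)) atTop (nhds 0) := by
    have h1 : Tendsto (fun m : ℕ => r ^ m) atTop (nhds 0) :=
      tendsto_pow_atTop_nhds_zero_of_lt_one hr0 hr1
    have h2 : Tendsto (fun k : ℕ => 2 ^ k) atTop atTop :=
      tendsto_pow_atTop_atTop_of_one_lt one_lt_two
    have := (h1.comp h2).const_mul (2 / (K * L))
    simpa using this
  exact squeeze_zero (fun k => norm_nonneg _) bound hpow
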